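/- Let ω = e^{2πi/3} ∈ ℂ and τ = ω + 2. For every natural number k with k ≡ 3 (mod 12) or k ≡ 9 (mod 12), one has |τ^k − 1|² = 1 + 3^k. -/

import Mathlib

open Complex

/-- The primitive cube root of unity `ω = e^{2πi/3}`. -/
noncomputable def ω : ℂ := Complex.exp (2 * Real.pi * Complex.I / 3)

/-- `τ = ω + 2`. -/
noncomputable def τ : ℂ := ω + 2

/- Since ω² + ω + 1 = 0, one computes τ³ = 3 + 6ω and τ⁶ = -27; as Re ω = -1/2, τ³ is purely imaginary,
hence so is τᵏ = (-27)ᵐ τ³ for k = 6m + 3. For purely imaginary z, |z - 1|² = 1 + |z|², and |τ|² = 3. -/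

open Real

theorem Complex.sq_norm_sub_one_of_re_eq_zero {z : ℂ} (hz : z.re = 0) :
    ‖z - 1‖ ^ 2 = 1 + ‖z‖ ^ 2 := by
  simp only [Complex.sq_norm, normSq_apply, sub_re, sub_im, one_re, one_im, hz]
  ring

lemma ω_eq_exp_mul_I : ω = exp ((2 * π / 3 : ℝ) * I) := by
  rw [ω]
  congr 1
  push_cast
  ring

lemma ω_re : ω.re = -1 / 2 := by
  rw [ω_eq_exp_mul_I, exp_ofReal_mul_I_re,
    show 2 * π / 3 = π - π / 3 by ring, Real.cos_pi_sub, Real.cos_pi_div_three]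
  norm_num

lemma normSq_ω : normSq ω = 1 := by
  rw [← Complex.sq_norm, ω_eq_exp_mul_I, norm_exp_ofReal_mul_I, one_pow]

lemma ω_sq_add_ω_add_one : ω ^ 2 + ω + 1 = 0 := by
  have hω : IsPrimitiveRoot ω 3 := by
    simpa [ω] using isPrimitiveRoot_exp 3 three_ne_zero
  have h := hω.geom_sum_eq_zero (by norm_num)
  simp only [Finset.sum_range_succ, Finset.sum_range_zero, pow_zero, pow_one, zero_add] at h
  linear_combination h

lemma τ_pow_three : τ ^ 3 = 3 + 6 * ω := by
  rw [τ]
  linear_combination (ω + 5) * ω_sq_add_ω_add_one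

lemma τ_pow_six : τ ^ 6 = -27 := by
  rw [show τ ^ 6 = (τ ^ 3) ^ 2 by ring, τ_pow_three]
  linear_combination 36 * ω_sq_add_ω_add_one

lemma re_τ_pow_of_mod_six_eq_three {k : ℕ} (hk : k % 6 = 3) : (τ ^ k).re = 0 := by
  obtain ⟨m, rfl⟩ : ∃ m, k = 6 * m + 3 := ⟨k / 6, by omega⟩
  have h27 : (-27 : ℂ) ^ m = ((-27 : ℝ) ^ m : ℝ) := by push_cast; rfl
  rw [pow_add, pow_mul, τ_pow_six, τ_pow_three, h27, re_ofReal_mul]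
  norm_num [ω_re]

lemma sq_norm_τ : ‖τ‖ ^ 2 = 3 := by
  have hω := normSq_ω
  rw [normSq_apply] at hω
  simp only [Complex.sq_norm, normSq_apply, τ, add_re, add_im, re_ofNat, im_ofNat, add_zero]
  linear_combination hω + 4 * ω_re

/-- For `k ≡ 3 (mod 12)` or `k ≡ 9 (mod 12)`,
one has `|τ^k − 1|² = 1 + 3^k`. -/
theorem normSq_tau_pow_sub_one_of_three_or_nine (k : ℕ)
    (hmod : k % 12 = 3 ∨ k % 12 = 9) :
    ‖τ ^ k - 1‖ ^ 2 = 1 + (3 : ℝ) ^ k := by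
  have hk : k % 6 = 3 := by omega
  rw [Complex.sq_norm_sub_one_of_re_eq_zero (re_τ_pow_of_mod_six_eq_three hk), norm_pow, ← pow_mul,
    mul_comm, pow_mul, sq_norm_τ]
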